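/- arXiv:1312.1055 — 2 statements merged into one kernel-verified Lean document; each statement's English description precedes it below -/
import Mathlib

section
/- On ℝ⁶ with coordinates (φ, θ, ψ, p_φ, p_θ, p_ψ), let g = g(φ,θ), u = u(φ,θ), v = v(φ,θ), w = w(φ,θ) be smooth functions and define the skew-symmetric bivector P̃_g with upper-triangular entries P̃(φ, p_φ) = g, P̃(θ, p_θ) = g, P̃(ψ, p_φ) = u, P̃(ψ, p_θ) = v, P̃(ψ, p_ψ) = 1, P̃(p_φ, p_θ) = (∂_θ g) p_φ − (∂_φ g) p_θ − w p_ψ, all other entries zero. Then P̃_g satisfies the Jacobi identity if and only if g(∂_φ v − ∂_θ u) + u ∂_θ g − v ∂_φ g − w = 0. -/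
open Matrix

/-- Partial derivative of a function on `ℝ⁶` in the `l`-th coordinate direction. -/
noncomputable def pd (f : (Fin 6 → ℝ) → ℝ) (l : Fin 6) (x : Fin 6 → ℝ) : ℝ :=
  fderiv ℝ f x (Pi.single l 1)

/-- The Turiel-type bivector `P̃_g` on `ℝ⁶` with coordinates
`(φ, θ, ψ, p_φ, p_θ, p_ψ)`: nonzero upper entries `P̃(φ,p_φ) = P̃(θ,p_θ) = g`,
`P̃(ψ,p_φ) = u`, `P̃(ψ,p_θ) = v`, `P̃(ψ,p_ψ) = 1`,
`P̃(p_φ,p_θ) = (∂_θ g) p_φ − (∂_φ g) p_θ − w p_ψ`. -/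
noncomputable def Ptur (g u v w : ℝ → ℝ → ℝ) (x : Fin 6 → ℝ) :
    Matrix (Fin 6) (Fin 6) ℝ :=
  let E : Matrix (Fin 6) (Fin 6) ℝ := fun i j =>
    if i = 0 ∧ j = 3 then g (x 0) (x 1)
    else if i = 1 ∧ j = 4 then g (x 0) (x 1)
    else if i = 2 ∧ j = 3 then u (x 0) (x 1)
    else if i = 2 ∧ j = 4 then v (x 0) (x 1)
    else if i = 2 ∧ j = 5 then 1
    else if i = 3 ∧ j = 4 then
      deriv (g (x 0)) (x 1) * x 3 - deriv (fun t => g t (x 1)) (x 0) * x 4 -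
        w (x 0) (x 1) * x 5
    else 0
  E - Eᵀ

noncomputable def PturE (g u v w : ℝ → ℝ → ℝ) (x : Fin 6 → ℝ) : Matrix (Fin 6) (Fin 6) ℝ := fun i j =>
    if i = 0 ∧ j = 3 then g (x 0) (x 1)
    else if i = 1 ∧ j = 4 then g (x 0) (x 1)
    else if i = 2 ∧ j = 3 then u (x 0) (x 1)
    else if i = 2 ∧ j = 4 then v (x 0) (x 1)
    else if i = 2 ∧ j = 5 then 1
    else if i = 3 ∧ j = 4 then
      deriv (g (x 0)) (x 1) * x 3 - deriv (fun t => g t (x 1)) (x 0) * x 4 -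
        w (x 0) (x 1) * x 5
    else 0

lemma Ptur_eq (g u v w : ℝ → ℝ → ℝ) (x : Fin 6 → ℝ) :
    Ptur g u v w x = PturE g u v w x - (PturE g u v w x)ᵀ := rfl

lemma PturE_apply (g u v w : ℝ → ℝ → ℝ) (x : Fin 6 → ℝ) (i j : Fin 6) :
    PturE g u v w x i j =
    if i = 0 ∧ j = 3 then g (x 0) (x 1)
    else if i = 1 ∧ j = 4 then g (x 0) (x 1)
    else if i = 2 ∧ j = 3 then u (x 0) (x 1)
    else if i = 2 ∧ j = 4 then v (x 0) (x 1)
    else if i = 2 ∧ j = 5 then 1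
    else if i = 3 ∧ j = 4 then
      deriv (g (x 0)) (x 1) * x 3 - deriv (fun t => g t (x 1)) (x 0) * x 4 -
        w (x 0) (x 1) * x 5
    else 0 := rfl

lemma pd_const (c : ℝ) (l : Fin 6) (x : Fin 6 → ℝ) : pd (fun _ => c) l x = 0 := by
  simp [pd]

lemma pd_neg (f : (Fin 6 → ℝ) → ℝ) (l : Fin 6) (x : Fin 6 → ℝ) :
    pd (fun y => -(f y)) l x = -(pd f l x) := by
  simp [pd, fderiv_neg]

lemma fd1 (F : ℝ → ℝ → ℝ) (hF : ContDiff ℝ (⊤ : ℕ∞) (Function.uncurry F)) (a b : ℝ) :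
    fderiv ℝ (Function.uncurry F) (a, b) (1, 0) = deriv (fun t => F t b) a := by
  have h1 : HasDerivAt (fun t : ℝ => (t, b)) ((1:ℝ), (0:ℝ)) a :=
    (hasDerivAt_id a).prodMk (hasDerivAt_const a b)
  exact (((hF.differentiable (by simp) (a, b)).hasFDerivAt.comp_hasDerivAt a h1).deriv).symm

lemma fd2 (F : ℝ → ℝ → ℝ) (hF : ContDiff ℝ (⊤ : ℕ∞) (Function.uncurry F)) (a b : ℝ) :
    fderiv ℝ (Function.uncurry F) (a, b) (0, 1) = deriv (F a) b := by
  have h1 : HasDerivAt (fun t : ℝ => (a, t)) ((0:ℝ), (1:ℝ)) b :=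
    (hasDerivAt_const b a).prodMk (hasDerivAt_id b)
  exact (((hF.differentiable (by simp) (a, b)).hasFDerivAt.comp_hasDerivAt b h1).deriv).symm

noncomputable def proj01 : (Fin 6 → ℝ) →L[ℝ] (ℝ × ℝ) :=
  (ContinuousLinearMap.proj 0).prod (ContinuousLinearMap.proj 1)

lemma hasF_base (F : ℝ → ℝ → ℝ) (hF : ContDiff ℝ (⊤ : ℕ∞) (Function.uncurry F)) (x : Fin 6 → ℝ) :
    HasFDerivAt (fun y : Fin 6 → ℝ => F (y 0) (y 1))
      ((fderiv ℝ (Function.uncurry F) (x 0, x 1)).comp proj01) x :=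
  ((hF.differentiable (by simp) (x 0, x 1)).hasFDerivAt).comp (g := Function.uncurry F) x proj01.hasFDerivAt

lemma pd_base (F : ℝ → ℝ → ℝ) (hF : ContDiff ℝ (⊤ : ℕ∞) (Function.uncurry F)) (l : Fin 6)
    (x : Fin 6 → ℝ) :
    pd (fun y => F (y 0) (y 1)) l x =
      if l = 0 then deriv (fun t => F t (x 1)) (x 0)
      else if l = 1 then deriv (F (x 0)) (x 1) else 0 := by
  rw [pd, (hasF_base F hF x).fderiv]
  fin_cases l <;>
    simp [proj01, fd1 F hF, fd2 F hF, Pi.single_apply, show ((0:ℝ),(0:ℝ)) = (0:ℝ×ℝ) from rfl]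

lemma pd_A (g w : ℝ → ℝ → ℝ) (hg : ContDiff ℝ (⊤ : ℕ∞) (Function.uncurry g))
    (hw : ContDiff ℝ (⊤ : ℕ∞) (Function.uncurry w)) (l : Fin 6) (x : Fin 6 → ℝ) :
    pd (fun y => deriv (g (y 0)) (y 1) * y 3 - deriv (fun t => g t (y 1)) (y 0) * y 4 -
        w (y 0) (y 1) * y 5) l x =
      if l = 0 then
        x 3 * fderiv ℝ (Function.uncurry fun a b : ℝ =>
            (fderiv ℝ (Function.uncurry g) (a, b)) (0, 1)) (x 0, x 1) (1, 0)
        - x 4 * fderiv ℝ (Function.uncurry fun a b : ℝ =>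
            (fderiv ℝ (Function.uncurry g) (a, b)) (1, 0)) (x 0, x 1) (1, 0)
        - x 5 * deriv (fun t => w t (x 1)) (x 0)
      else if l = 1 then
        x 3 * fderiv ℝ (Function.uncurry fun a b : ℝ =>
            (fderiv ℝ (Function.uncurry g) (a, b)) (0, 1)) (x 0, x 1) (0, 1)
        - x 4 * fderiv ℝ (Function.uncurry fun a b : ℝ =>
            (fderiv ℝ (Function.uncurry g) (a, b)) (1, 0)) (x 0, x 1) (0, 1)
        - x 5 * deriv (w (x 0)) (x 1)
      else if l = 3 then deriv (g (x 0)) (x 1)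
      else if l = 4 then -deriv (fun t => g t (x 1)) (x 0)
      else if l = 5 then -(w (x 0) (x 1))
      else 0 := by
  have hG2 : ContDiff ℝ (⊤ : ℕ∞) (Function.uncurry fun a b : ℝ =>
      (fderiv ℝ (Function.uncurry g) (a, b)) (0, 1)) :=
    (hg.fderiv_right (m := (⊤ : ℕ∞)) (by simp)).clm_apply contDiff_const
  have hG1 : ContDiff ℝ (⊤ : ℕ∞) (Function.uncurry fun a b : ℝ =>
      (fderiv ℝ (Function.uncurry g) (a, b)) (1, 0)) :=
    (hg.fderiv_right (m := (⊤ : ℕ∞)) (by simp)).clm_apply contDiff_const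
  have hfun : (fun y : Fin 6 → ℝ => deriv (g (y 0)) (y 1) * y 3 -
      deriv (fun t => g t (y 1)) (y 0) * y 4 - w (y 0) (y 1) * y 5) =
      (fun y : Fin 6 → ℝ => (fderiv ℝ (Function.uncurry g) (y 0, y 1)) (0, 1) * y 3 -
        (fderiv ℝ (Function.uncurry g) (y 0, y 1)) (1, 0) * y 4 - w (y 0) (y 1) * y 5) := by
    funext y; rw [fd1 g hg, fd2 g hg]
  rw [pd, hfun]
  have hA : HasFDerivAt (fun y : Fin 6 → ℝ =>
      (fderiv ℝ (Function.uncurry g) (y 0, y 1)) (0, 1) * y 3 -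
        (fderiv ℝ (Function.uncurry g) (y 0, y 1)) (1, 0) * y 4 - w (y 0) (y 1) * y 5)
      ((((fderiv ℝ (Function.uncurry g) (x 0, x 1)) (0, 1)) • ContinuousLinearMap.proj 3 +
          (x 3) • ((fderiv ℝ (Function.uncurry fun a b : ℝ =>
            (fderiv ℝ (Function.uncurry g) (a, b)) (0, 1)) (x 0, x 1)).comp proj01) -
        (((fderiv ℝ (Function.uncurry g) (x 0, x 1)) (1, 0)) • ContinuousLinearMap.proj 4 +
          (x 4) • ((fderiv ℝ (Function.uncurry fun a b : ℝ =>
            (fderiv ℝ (Function.uncurry g) (a, b)) (1, 0)) (x 0, x 1)).comp proj01))) -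
        ((w (x 0) (x 1)) • ContinuousLinearMap.proj 5 +
          (x 5) • ((fderiv ℝ (Function.uncurry w) (x 0, x 1)).comp proj01))) x :=
    (((hasF_base _ hG2 x).mul (ContinuousLinearMap.proj 3).hasFDerivAt).sub
      ((hasF_base _ hG1 x).mul (ContinuousLinearMap.proj 4).hasFDerivAt)).sub
      ((hasF_base w hw x).mul (ContinuousLinearMap.proj 5).hasFDerivAt)
  rw [hA.fderiv]
  fin_cases l <;>
    simp [proj01, Pi.single_apply, fd1 g hg, fd2 g hg, fd1 w hw, fd2 w hw,
      show ((0:ℝ),(0:ℝ)) = (0:ℝ×ℝ) from rfl]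

set_option maxHeartbeats 1000000 in
/-- The bivector `P̃_g` satisfies the Jacobi identity if and only if
`g (∂_φ v − ∂_θ u) + u ∂_θ g − v ∂_φ g − w = 0`. -/
theorem turiel_jacobi_iff (g u v w : ℝ → ℝ → ℝ)
    (hg : ContDiff ℝ (⊤ : ℕ∞) (Function.uncurry g)) (hu : ContDiff ℝ (⊤ : ℕ∞) (Function.uncurry u))
    (hv : ContDiff ℝ (⊤ : ℕ∞) (Function.uncurry v)) (hw : ContDiff ℝ (⊤ : ℕ∞) (Function.uncurry w)) :
    (∀ (x : Fin 6 → ℝ) (i j k : Fin 6),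
      ∑ l, (Ptur g u v w x l i * pd (fun y => Ptur g u v w y j k) l x +
            Ptur g u v w x l j * pd (fun y => Ptur g u v w y k i) l x +
            Ptur g u v w x l k * pd (fun y => Ptur g u v w y i j) l x) = 0) ↔
    (∀ a b : ℝ,
      g a b * (deriv (fun t => v t b) a - deriv (u a) b) +
        u a b * deriv (g a) b - v a b * deriv (fun t => g t b) a - w a b = 0) := by
  constructor
  · intro h a b
    have H := h (fun i => if i = 0 then a else if i = 1 then b else 0) 2 3 4
    simp only [Fin.sum_univ_six, Ptur_eq, PturE_apply, Matrix.sub_apply, Matrix.transpose_apply, Fin.reduceEq,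
      and_true, true_and, and_false, false_and, and_self, if_true, if_false, reduceIte,
      sub_zero, zero_sub, sub_self, pd_neg, pd_const, pd_base g hg, pd_base u hu, pd_base v hv,
      pd_A g w hg hw, mul_zero, zero_mul, add_zero, zero_add, mul_one, one_mul, mul_neg,
      neg_mul, neg_neg, neg_zero] at H
    linear_combination -H
  · intro h x i j k
    have hcase : ∀ m : Fin 6, m = 0 ∨ m = 1 ∨ m = 2 ∨ m = 3 ∨ m = 4 ∨ m = 5 := by decide
    rcases hcase i with rfl | rfl | rfl | rfl | rfl | rfl <;>
      rcases hcase j with rfl | rfl | rfl | rfl | rfl | rfl <;>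
      rcases hcase k with rfl | rfl | rfl | rfl | rfl | rfl <;>
      simp only [Fin.sum_univ_six, Ptur_eq, PturE_apply, Matrix.sub_apply, Matrix.transpose_apply, Fin.reduceEq,
        and_true, true_and, and_false, false_and, and_self, if_true, if_false, reduceIte,
        sub_zero, zero_sub, sub_self, pd_neg, pd_const, pd_base g hg, pd_base u hu, pd_base v hv,
        pd_A g w hg hw, mul_zero, zero_mul, add_zero, zero_add, mul_one, one_mul, mul_neg,
        neg_mul, neg_neg, neg_zero] <;>
      all_goals first
        | ring1
        | linear_combination h (x 0) (x 1)
        | linear_combination -h (x 0) (x 1)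
end

section
/- On ℝ⁶ with coordinates (φ, θ, ψ, p_φ, p_θ, p_ψ), let P̃_g be the bivector of the Turiel-type deformation, with functions g, u, v, w of (φ,θ) satisfying g(∂_φ v − ∂_θ u) + u ∂_θ g − v ∂_φ g − w = 0 and g ≠ 0. Then the change of momenta p̃_φ = g^{-1}(p_φ − u p_ψ), p̃_θ = g^{-1}(p_θ − v p_ψ), p̃_ψ = p_ψ transforms the bracket defined by P̃_g into the canonical bracket {q_i, p̃_j} = δ_{ij}, {q_i, q_j} = {p̃_i, p̃_j} = 0. -/
open Matrix

/-- The bracket defined by `P̃_g`. -/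
noncomputable def pturBr (g u v w : ℝ → ℝ → ℝ) (F G : (Fin 6 → ℝ) → ℝ)
    (x : Fin 6 → ℝ) : ℝ :=
  ∑ i, ∑ j, Ptur g u v w x i j * pd F i x * pd G j x

lemma pd_coord (k l : Fin 6) (x : Fin 6 → ℝ) :
    pd (fun y => y k) l x = if l = k then 1 else 0 := by
  have h : HasFDerivAt (fun y : Fin 6 → ℝ => y k)
      (ContinuousLinearMap.proj (R := ℝ) (φ := fun _ : Fin 6 => ℝ) k) x :=
    (ContinuousLinearMap.proj (R := ℝ) (φ := fun _ : Fin 6 => ℝ) k).hasFDerivAt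
  rw [pd, h.fderiv]
  simp [Pi.single_apply, eq_comm]

lemma diff_comp2 (f : ℝ → ℝ → ℝ) (hf : ContDiff ℝ (⊤ : ℕ∞) (Function.uncurry f)) :
    Differentiable ℝ (fun y : Fin 6 → ℝ => f (y 0) (y 1)) := by
  have : (fun y : Fin 6 → ℝ => f (y 0) (y 1)) =
      Function.uncurry f ∘ (fun y : Fin 6 → ℝ => (y 0, y 1)) := rfl
  rw [this]
  exact (hf.differentiable (by simp)).comp (by fun_prop)

lemma pd_comp2 (f : ℝ → ℝ → ℝ) (hf : ContDiff ℝ (⊤ : ℕ∞) (Function.uncurry f))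
    (l : Fin 6) (x : Fin 6 → ℝ) :
    pd (fun y => f (y 0) (y 1)) l x =
      (if l = 0 then deriv (fun t => f t (x 1)) (x 0) else 0) +
      (if l = 1 then deriv (f (x 0)) (x 1) else 0) := by
  set D := fderiv ℝ (Function.uncurry f) (x 0, x 1) with hDdef
  have hD : HasFDerivAt (Function.uncurry f) D (x 0, x 1) :=
    (hf.differentiable (by simp) (x 0, x 1)).hasFDerivAt
  have hL : HasFDerivAt (fun y : Fin 6 → ℝ => ((y 0, y 1) : ℝ × ℝ))
      ((ContinuousLinearMap.proj (R := ℝ) (φ := fun _ : Fin 6 => ℝ) 0).prod (ContinuousLinearMap.proj (R := ℝ) (φ := fun _ : Fin 6 => ℝ) 1)) x :=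
    (((ContinuousLinearMap.proj (R := ℝ) (φ := fun _ : Fin 6 => ℝ) 0)).prod
      (ContinuousLinearMap.proj (R := ℝ) (φ := fun _ : Fin 6 => ℝ) 1)).hasFDerivAt
  have hcomp : HasFDerivAt (fun y : Fin 6 → ℝ => f (y 0) (y 1))
      (D.comp ((ContinuousLinearMap.proj (R := ℝ) (φ := fun _ : Fin 6 => ℝ) 0).prod (ContinuousLinearMap.proj (R := ℝ) (φ := fun _ : Fin 6 => ℝ) 1))) x :=
    by have := hD.comp x hL; exact this
  have h1 : deriv (fun t => f t (x 1)) (x 0) = D (1, 0) := by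
    have h := hD.comp_hasDerivAt (x 0)
      ((hasDerivAt_id (x 0)).prodMk (hasDerivAt_const (x 0) (x 1)))
    exact h.deriv
  have h2 : deriv (f (x 0)) (x 1) = D (0, 1) := by
    have h := hD.comp_hasDerivAt (x 1)
      ((hasDerivAt_const (x 1) (x 0)).prodMk (hasDerivAt_id (x 1)))
    exact h.deriv
  rw [pd, hcomp.fderiv]
  fin_cases l <;>
    simp [h1, h2, Pi.single_apply, Prod.ext_iff, Prod.mk_zero_zero]

lemma pd_mul {F H : (Fin 6 → ℝ) → ℝ} {x : Fin 6 → ℝ}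
    (hF : DifferentiableAt ℝ F x) (hH : DifferentiableAt ℝ H x) (l : Fin 6) :
    pd (fun y => F y * H y) l x = pd F l x * H x + F x * pd H l x := by
  simp only [pd, fderiv_fun_mul hF hH, ContinuousLinearMap.add_apply,
    ContinuousLinearMap.smul_apply, smul_eq_mul]
  ring

lemma pd_sub {F H : (Fin 6 → ℝ) → ℝ} {x : Fin 6 → ℝ}
    (hF : DifferentiableAt ℝ F x) (hH : DifferentiableAt ℝ H x) (l : Fin 6) :
    pd (fun y => F y - H y) l x = pd F l x - pd H l x := by
  simp only [pd, fderiv_fun_sub hF hH, ContinuousLinearMap.sub_apply]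

lemma pd_inv {F : (Fin 6 → ℝ) → ℝ} {x : Fin 6 → ℝ}
    (hF : DifferentiableAt ℝ F x) (hne : F x ≠ 0) (l : Fin 6) :
    pd (fun y => (F y)⁻¹) l x = -((F x)^2)⁻¹ * pd F l x := by
  have h := (hasDerivAt_inv hne).comp_hasFDerivAt x hF.hasFDerivAt
  have h2 : HasFDerivAt (fun y => (F y)⁻¹) (-(F x ^ 2)⁻¹ • fderiv ℝ F x) x := h
  rw [pd, h2.fderiv]
  simp [pd]

lemma Ptur_apply (g u v w : ℝ → ℝ → ℝ) (x : Fin 6 → ℝ) (i j : Fin 6) :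
    Ptur g u v w x i j =
      (if i = 0 ∧ j = 3 then g (x 0) (x 1)
      else if i = 1 ∧ j = 4 then g (x 0) (x 1)
      else if i = 2 ∧ j = 3 then u (x 0) (x 1)
      else if i = 2 ∧ j = 4 then v (x 0) (x 1)
      else if i = 2 ∧ j = 5 then 1
      else if i = 3 ∧ j = 4 then
        deriv (g (x 0)) (x 1) * x 3 - deriv (fun t => g t (x 1)) (x 0) * x 4 -
          w (x 0) (x 1) * x 5
      else 0) -
      (if j = 0 ∧ i = 3 then g (x 0) (x 1)
      else if j = 1 ∧ i = 4 then g (x 0) (x 1)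
      else if j = 2 ∧ i = 3 then u (x 0) (x 1)
      else if j = 2 ∧ i = 4 then v (x 0) (x 1)
      else if j = 2 ∧ i = 5 then 1
      else if j = 3 ∧ i = 4 then
        deriv (g (x 0)) (x 1) * x 3 - deriv (fun t => g t (x 1)) (x 0) * x 4 -
          w (x 0) (x 1) * x 5
      else 0) := rfl

set_option maxHeartbeats 4000000 in
lemma pturBr_eq (g u v w : ℝ → ℝ → ℝ) (F H : (Fin 6 → ℝ) → ℝ) (x : Fin 6 → ℝ) :
    pturBr g u v w F H x =
      g (x 0) (x 1) * (pd F 0 x * pd H 3 x - pd F 3 x * pd H 0 x)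
      + g (x 0) (x 1) * (pd F 1 x * pd H 4 x - pd F 4 x * pd H 1 x)
      + u (x 0) (x 1) * (pd F 2 x * pd H 3 x - pd F 3 x * pd H 2 x)
      + v (x 0) (x 1) * (pd F 2 x * pd H 4 x - pd F 4 x * pd H 2 x)
      + (pd F 2 x * pd H 5 x - pd F 5 x * pd H 2 x)
      + (deriv (g (x 0)) (x 1) * x 3 - deriv (fun t => g t (x 1)) (x 0) * x 4 -
          w (x 0) (x 1) * x 5) * (pd F 3 x * pd H 4 x - pd F 4 x * pd H 3 x) := by
  simp (config := { decide := true }) only [pturBr, Ptur_apply, Fin.sum_univ_six,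
    Matrix.sub_apply, Matrix.transpose_apply, if_true, if_false]
  ring

lemma pd_mom (g h : ℝ → ℝ → ℝ) (hg : ContDiff ℝ (⊤ : ℕ∞) (Function.uncurry g))
    (hh : ContDiff ℝ (⊤ : ℕ∞) (Function.uncurry h)) (hne : ∀ a b, g a b ≠ 0)
    (k l : Fin 6) (x : Fin 6 → ℝ) :
    pd (fun y => (g (y 0) (y 1))⁻¹ * (y k - h (y 0) (y 1) * y 5)) l x =
      -((g (x 0) (x 1)) ^ 2)⁻¹ * pd (fun y => g (y 0) (y 1)) l x *
          (x k - h (x 0) (x 1) * x 5)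
      + (g (x 0) (x 1))⁻¹ *
        ((if l = k then 1 else 0) -
          (pd (fun y => h (y 0) (y 1)) l x * x 5 +
            h (x 0) (x 1) * (if l = 5 then 1 else 0))) := by
  have hdG := (diff_comp2 g hg) x
  have hdH := (diff_comp2 h hh) x
  have hdk : DifferentiableAt ℝ (fun y : Fin 6 → ℝ => y k) x := by fun_prop
  have hd5 : DifferentiableAt ℝ (fun y : Fin 6 → ℝ => y 5) x := by fun_prop
  have hdGi : DifferentiableAt ℝ (fun y : Fin 6 → ℝ => (g (y 0) (y 1))⁻¹) x :=
    hdG.inv (hne _ _)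
  rw [pd_mul hdGi (hdk.fun_sub (hdH.fun_mul hd5)) l, pd_inv hdG (hne _ _) l,
    pd_sub hdk (hdH.fun_mul hd5) l, pd_mul hdH hd5 l, pd_coord k l x, pd_coord 5 l x]

/-- If `g (∂_φ v − ∂_θ u) + u ∂_θ g − v ∂_φ g − w = 0` and `g ≠ 0`, the
change of momenta `p̃_φ = g⁻¹(p_φ − u p_ψ)`, `p̃_θ = g⁻¹(p_θ − v p_ψ)`, `p̃_ψ = p_ψ`
transforms the bracket of `P̃_g` into the canonical one:
`{q_i, p̃_j} = δ_{ij}`, `{q_i, q_j} = 0`, `{p̃_i, p̃_j} = 0`. -/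
theorem turiel_reduces_to_canonical (g u v w : ℝ → ℝ → ℝ)
    (hg : ContDiff ℝ (⊤ : ℕ∞) (Function.uncurry g)) (hu : ContDiff ℝ (⊤ : ℕ∞) (Function.uncurry u))
    (hv : ContDiff ℝ (⊤ : ℕ∞) (Function.uncurry v)) (hw : ContDiff ℝ (⊤ : ℕ∞) (Function.uncurry w))
    (hgne : ∀ a b : ℝ, g a b ≠ 0)
    (hcond : ∀ a b : ℝ,
      g a b * (deriv (fun t => v t b) a - deriv (u a) b) +
        u a b * deriv (g a) b - v a b * deriv (fun t => g t b) a - w a b = 0) :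
    let q : Fin 3 → ((Fin 6 → ℝ) → ℝ) := ![fun x => x 0, fun x => x 1, fun x => x 2]
    let pt : Fin 3 → ((Fin 6 → ℝ) → ℝ) :=
      ![fun x => (g (x 0) (x 1))⁻¹ * (x 3 - u (x 0) (x 1) * x 5),
        fun x => (g (x 0) (x 1))⁻¹ * (x 4 - v (x 0) (x 1) * x 5),
        fun x => x 5]
    ∀ (x : Fin 6 → ℝ) (i j : Fin 3),
      pturBr g u v w (q i) (pt j) x = (if i = j then 1 else 0) ∧
      pturBr g u v w (q i) (q j) x = 0 ∧
      pturBr g u v w (pt i) (pt j) x = 0 := by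
  intro q pt x i j
  have hgx := hgne (x 0) (x 1)
  have hc := hcond (x 0) (x 1)
  have hi : (g (x 0) (x 1))⁻¹ * g (x 0) (x 1) = 1 := inv_mul_cancel₀ (hgne _ _)
  fin_cases i <;> fin_cases j <;>
    refine ⟨?_, ?_, ?_⟩ <;>
    · simp only [q, pt]
      simp only [Fin.zero_eta, Fin.mk_one, Fin.reduceFinMk, Matrix.cons_val_zero,
        Matrix.cons_val_one, Matrix.head_cons, Matrix.cons_val_two, Matrix.tail_cons]
      rw [pturBr_eq]
      simp only [pd_coord, pd_mom g u hg hu hgne, pd_mom g v hg hv hgne,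
        pd_comp2 g hg, pd_comp2 u hu, pd_comp2 v hv]
      simp (config := { decide := true }) only [if_true, if_false]
      norm_num
      all_goals first
        | ring1
        | (refine Or.inr ?_; ring1)
        | simp
        | linear_combination hi
        | linear_combination
            ((g (x 0) (x 1))⁻¹ ^ 2 * x 5) * hc +
            ((g (x 0) (x 1))⁻¹ ^ 2 *
              (deriv (fun t => g t (x 1)) (x 0) * x 4 - deriv (g (x 0)) (x 1) * x 3 -
                deriv (fun t => g t (x 1)) (x 0) * v (x 0) (x 1) * x 5 +
                deriv (g (x 0)) (x 1) * u (x 0) (x 1) * x 5)) * hi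
        | linear_combination
            (-((g (x 0) (x 1))⁻¹ ^ 2 * x 5)) * hc +
            (-((g (x 0) (x 1))⁻¹ ^ 2 *
              (deriv (fun t => g t (x 1)) (x 0) * x 4 - deriv (g (x 0)) (x 1) * x 3 -
                deriv (fun t => g t (x 1)) (x 0) * v (x 0) (x 1) * x 5 +
                deriv (g (x 0)) (x 1) * u (x 0) (x 1) * x 5))) * hi
end
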